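/- arXiv:1903.09996 — 4 statements merged into one kernel-verified Lean document; each statement's English description precedes it below -/
import Mathlib

section
/- Zero eigenvalue of the normalized N-cycle matrix (Proposition 3.2(i), existence and simplicity). Let A(a) be the normalized N-cycle matrix defined in the context. Then: (a) for every a ≥ 0, the matrix A(a) has 0 as an eigenvalue (equivalently det A(a) = 0) if and only if (−1)^{N_aut} = β and a = 1; (b) if (−1)^{N_aut} = β, then 0 is an algebraically simple root of the characteristic polynomial of A(1) if and only if Σ_{m=1}^N 1/α_m ≠ 0. -/
open scoped BigOperators

/-- The normalized `N`-cycle matrix `A(a)`: diagonal entries `-a·α m`,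
sub-diagonal entries `1`, corner entry `A 0 (N-1) = β`; all other entries `0`. -/
noncomputable def Acyc (N : ℕ) (α : Fin N → ℝ) (β : ℝ) (a : ℝ) :
    Matrix (Fin N) (Fin N) ℝ :=
  Matrix.of fun i j =>
    if j = i then -(a * α i)
    else if ((j : ℕ) + 1) % N = (i : ℕ) then (if (i : ℕ) = 0 then β else 1) else 0

/-- The eigenvalues of a real matrix: roots in `ℂ` of its characteristic
polynomial, counted with algebraic multiplicity. -/
noncomputable def specC {N : ℕ} (A : Matrix (Fin N) (Fin N) ℝ) : Multiset ℂ :=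
  (Matrix.charpoly (A.map (algebraMap ℝ ℂ))).roots

/-- `μ(A)`: the number of eigenvalues of `A` with strictly positive real part,
counted with algebraic multiplicity. -/
noncomputable def muM {N : ℕ} (A : Matrix (Fin N) (Fin N) ℝ) : ℕ :=
  Multiset.card ((specC A).filter fun z => 0 < z.re)

/-- `N_aut`: the number of indices `m` with `α m < 0`. -/
noncomputable def NautOf {N : ℕ} (α : Fin N → ℝ) : ℕ :=
  (Finset.univ.filter fun m => α m < 0).card

/-!
Only the diagonal and the cyclic subdiagonal of `A(a)` are nonzero, so the identity and the
rotation `i ↦ i + 1` are the only permutations contributing to `det (X - A(a))`, and the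
characteristic polynomial is `∏ m, (X + a α m) - β`. Its value at `0` is
`a ^ N ∏ m, α m - β = a ^ N (-1) ^ N_aut - β`, which vanishes for `a ≥ 0` exactly when `a = 1` and
`(-1) ^ N_aut = β`. In that case `0` is a simple root iff the derivative, whose value at `0` is
`(∏ m, α m) * ∑ m, (α m)⁻¹`, does not vanish there.
-/

open Polynomial Equiv

theorem Equiv.Perm.eq_one_or_eq_finRotate_of_apply_eq_or_succ {n : ℕ} (σ : Perm (Fin (n + 2)))
    (h : ∀ i, σ i = i ∨ σ i = i + 1) : σ = 1 ∨ σ = finRotate (n + 2) := by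
  by_cases hfix : ∀ i, σ i = i
  · exact .inl (Equiv.ext hfix)
  push Not at hfix
  obtain ⟨i₀, hi₀⟩ := hfix
  have hstep : ∀ i, σ i = i + 1 → σ (i + 1) = i + 1 + 1 := fun i hi =>
    (h (i + 1)).resolve_left fun hi' => by simpa using σ.injective (hi.trans hi'.symm)
  have hpow : ∀ k : ℕ, σ ((finRotate (n + 2) ^ k) i₀) = (finRotate (n + 2) ^ k) i₀ + 1 := by
    intro k
    induction k with
    | zero => exact (h i₀).resolve_left hi₀
    | succ k ih => rw [pow_succ', Perm.mul_apply, finRotate_apply]; exact hstep _ ih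
  refine .inr (Equiv.ext fun i => ?_)
  obtain ⟨k, rfl⟩ := isCycle_finRotate.exists_pow_eq (x := i₀) (y := i) (by simp) (by simp)
  rw [hpow, finRotate_apply]

theorem Matrix.det_eq_prod_diag_add_prod_subdiag_of_cyclic {R : Type*} [CommRing R] {n : ℕ}
    (M : Matrix (Fin (n + 2)) (Fin (n + 2)) R) (hM : ∀ i j, i ≠ j → i ≠ j + 1 → M i j = 0) :
    M.det = ∏ i, M i i + (-1) ^ (n + 1) * ∏ i, M (i + 1) i := by
  have h1 : (1 : Perm (Fin (n + 2))) ≠ finRotate (n + 2) := fun h => by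
    simpa using congrArg (· 0) h
  rw [det_apply, Finset.sum_eq_add_of_mem 1 (finRotate (n + 2)) (Finset.mem_univ _)
    (Finset.mem_univ _) h1]
  · simp [sign_finRotate, Units.smul_def]
  · rintro σ - ⟨hσ1, hσrot⟩
    obtain ⟨i, hi⟩ : ∃ i, σ i ≠ i ∧ σ i ≠ i + 1 := by
      by_contra! hσ
      exact (σ.eq_one_or_eq_finRotate_of_apply_eq_or_succ fun i =>
        or_iff_not_imp_left.2 (hσ i)).elim hσ1 hσrot
    exact smul_eq_zero_of_right _ (Finset.prod_eq_zero (Finset.mem_univ i) (hM _ _ hi.1 hi.2))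

theorem prod_eq_neg_one_pow_NautOf_mul_prod_abs {N : ℕ} (α : Fin N → ℝ) :
    ∏ m, α m = (-1) ^ NautOf α * ∏ m, |α m| := by
  have hsign : ∀ m, α m = (if α m < 0 then -1 else 1) * |α m| := fun m => by
    split_ifs with h
    · rw [abs_of_neg h, neg_one_mul, neg_neg]
    · rw [abs_of_nonneg (not_lt.mp h), one_mul]
  rw [Finset.prod_congr rfl fun m _ => hsign m, Finset.prod_mul_distrib, Finset.prod_ite,
    Finset.prod_const, Finset.prod_const_one, mul_one, NautOf]

theorem pow_mul_neg_one_pow_eq_iff {a b : ℝ} {N : ℕ} (k : ℕ) (ha : 0 ≤ a) (hN : N ≠ 0)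
    (hb : |b| = 1) : a ^ N * (-1) ^ k = b ↔ (-1) ^ k = b ∧ a = 1 := by
  refine ⟨fun h => ?_, fun ⟨hk, ha1⟩ => by rw [ha1, one_pow, one_mul, hk]⟩
  have ha1 : a = 1 := by
    rw [← pow_eq_one_iff_of_nonneg ha hN, ← hb, ← h]
    simp [abs_of_nonneg (pow_nonneg ha N)]
  rw [ha1, one_pow, one_mul] at h
  exact ⟨h, ha1⟩

namespace Polynomial

theorem rootMultiplicity_eq_one_iff_not_isRoot_derivative {R : Type*} [CommRing R] {p : R[X]}
    {t : R} (hp : p ≠ 0) (hroot : p.IsRoot t) :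
    p.rootMultiplicity t = 1 ↔ ¬ (derivative p).IsRoot t := by
  have hpos : 0 < p.rootMultiplicity t := (rootMultiplicity_pos hp).mpr hroot
  rw [← not_iff_not, not_not,
    ← (one_lt_rootMultiplicity_iff_isRoot hp).trans (and_iff_right hroot)]
  omega

theorem eval_zero_derivative_prod_X_add_C {ι K : Type*} [Field K] (s : Finset ι) (c : ι → K)
    (hc : ∀ i ∈ s, c i ≠ 0) :
    (derivative (∏ i ∈ s, (X + C (c i)))).eval 0 = (∏ i ∈ s, c i) * ∑ i ∈ s, (c i)⁻¹ := by
  classical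
  rw [derivative_prod_finset, eval_finsetSum, Finset.mul_sum]
  refine Finset.sum_congr rfl fun i hi => ?_
  simp [eval_prod, ← Finset.prod_erase_mul s c hi, hc i hi]

end Polynomial

section Acyc

variable {n : ℕ} (α : Fin (n + 2) → ℝ) (β a : ℝ)

theorem Acyc_apply_self (i : Fin (n + 2)) : Acyc (n + 2) α β a i i = -(a * α i) := by
  simp [Acyc]

theorem Acyc_apply_of_ne {i j : Fin (n + 2)} (hij : i ≠ j) :
    Acyc (n + 2) α β a i j = if i = j + 1 then (if i = 0 then β else 1) else 0 := by
  have hval : ((j : ℕ) + 1) % (n + 2) = ((j + 1 : Fin (n + 2)) : ℕ) := by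
    rw [Fin.val_add, Fin.val_one]
  rw [Acyc, Matrix.of_apply, if_neg hij.symm, hval]
  simp [Fin.val_inj, eq_comm (a := j + 1)]

theorem prod_Acyc_add_one_apply : ∏ i, Acyc (n + 2) α β a (i + 1) i = β := by
  simp [Acyc_apply_of_ne, add_eq_zero_iff_eq_neg]

theorem charpoly_Acyc : (Acyc (n + 2) α β a).charpoly = ∏ i, (X + C (a * α i)) - C β := by
  have hsub : ∏ i, (Acyc (n + 2) α β a).charmatrix (i + 1) i = (-1) ^ (n + 2) * C β := by
    rw [Finset.prod_congr rfl fun (i : Fin (n + 2)) _ =>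
      Matrix.charmatrix_apply_ne _ _ _ (by simp : i + 1 ≠ i),
      Finset.prod_neg, ← map_prod, prod_Acyc_add_one_apply, Finset.card_univ, Fintype.card_fin]
  rw [Matrix.charpoly, Matrix.det_eq_prod_diag_add_prod_subdiag_of_cyclic, hsub, ← mul_assoc,
    ← pow_add, Odd.neg_one_pow ⟨n + 1, by ring⟩]
  · simp only [Matrix.charmatrix_apply_eq, Acyc_apply_self, map_neg, sub_neg_eq_add]
    ring
  · intro i j hij hij1
    rw [Matrix.charmatrix_apply_ne _ _ _ hij, Acyc_apply_of_ne _ _ _ hij, if_neg hij1]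
    simp

end Acyc

/-- **Zero eigenvalue of the normalized N-cycle matrix (Proposition 3.2(i),
existence and simplicity).** (a) For `a ≥ 0`, `A(a)` has eigenvalue `0` iff
`(−1)^{N_aut} = β` and `a = 1`. (b) If `(−1)^{N_aut} = β`, then `0` is an
algebraically simple root of the characteristic polynomial of `A(1)` iff
`Σ_m 1/α_m ≠ 0`. -/
theorem zero_eigenvalue_Acyc (N : ℕ) (hN : 3 ≤ N) (α : Fin N → ℝ)
    (hα : ∀ m, α m ≠ 0) (hprod : ∏ m : Fin N, |α m| = 1)
    (b : ℤ) (hb : b = 1 ∨ b = -1) :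
    (∀ a : ℝ, 0 ≤ a →
      (((0 : ℂ) ∈ specC (Acyc N α (b : ℝ) a)) ↔
        ((-1 : ℤ) ^ (NautOf α) = b ∧ a = 1))) ∧
    ((-1 : ℤ) ^ (NautOf α) = b →
      (Polynomial.rootMultiplicity (0 : ℂ)
          (Matrix.charpoly ((Acyc N α (b : ℝ) 1).map (algebraMap ℝ ℂ))) = 1 ↔
        ∑ m : Fin N, (α m)⁻¹ ≠ 0)) := by
  obtain ⟨n, rfl⟩ : ∃ n, N = n + 2 := ⟨N - 2, by omega⟩
  have hprodα : ∏ m, α m = (-1) ^ NautOf α := by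
    rw [prod_eq_neg_one_pow_NautOf_mul_prod_abs, hprod, mul_one]
  have heval (a : ℝ) :
      (Acyc (n + 2) α b a).charpoly.eval 0 = a ^ (n + 2) * (-1) ^ NautOf α - b := by
    simp [charpoly_Acyc, eval_prod, Finset.prod_mul_distrib, hprodα]
  refine ⟨fun a ha => ?_, fun hsign => ?_⟩
  · have hb1 : |(b : ℝ)| = 1 := by rcases hb with rfl | rfl <;> simp
    rw [specC, Matrix.charpoly_map, mem_roots ((Matrix.charpoly_monic _).map _).ne_zero,
      IsRoot.def, eval_zero_map, heval, map_eq_zero_iff _ (algebraMap ℝ ℂ).injective, sub_eq_zero,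
      pow_mul_neg_one_pow_eq_iff _ ha (by omega) hb1]
    norm_cast
  · have hroot : (Acyc (n + 2) α b 1).charpoly.IsRoot 0 := by
      rw [IsRoot.def, heval, one_pow, one_mul, sub_eq_zero]
      exact_mod_cast hsign
    rw [Matrix.charpoly_map, ← map_zero (algebraMap ℝ ℂ), ← eq_rootMultiplicity_map
      (algebraMap ℝ ℂ).injective, rootMultiplicity_eq_one_iff_not_isRoot_derivative
      (Matrix.charpoly_monic _).ne_zero hroot, charpoly_Acyc, derivative_sub, derivative_C,
      sub_zero, IsRoot.def, eval_zero_derivative_prod_X_add_C _ _ fun i _ => by simpa using hα i]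
    simp [hprodα]
end

section
/- Transverse crossing of the zero eigenvalue at a = 1 (Proposition 3.2(i), derivative formula (3.12)). Let A(a) be the normalized N-cycle matrix defined in the context, assume (−1)^{N_aut} = β and Σ_{m=1}^N 1/α_m ≠ 0. Let δ > 0 and let λ : (1−δ, 1+δ) → ℝ be differentiable with λ(1) = 0 and det(λ(a)·I_N − A(a)) = 0 for all a ∈ (1−δ, 1+δ). Then λ'(1) = −N / (Σ_{m=1}^N 1/α_m), i.e. λ'(1) equals minus the harmonic mean of α_1,…,α_N. -/
open scoped BigOperators

/-! The matrix `λ I − A(a)` is cyclic bidiagonal, so only the identity and the full rotation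
contribute to the Leibniz expansion of its determinant, which is `∏ₘ (λ + a αₘ) − β`. Along the
eigenvalue branch this product is therefore constant in `a`; differentiating it at `a = 1`, where
`λ = 0`, gives `(∏ₘ αₘ) (λ'(1) Σₘ 1/αₘ + N) = 0`. -/

open Fin.NatCast in
theorem Equiv.Perm.eq_one_or_eq_finRotate_of_forall_eq_or_eq_add_one {n : ℕ}
    (σ : Equiv.Perm (Fin (n + 2))) (h : ∀ i, σ i = i ∨ σ i = i + 1) :
    σ = 1 ∨ σ = finRotate (n + 2) := by
  by_cases hid : σ = 1
  · exact Or.inl hid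
  right
  obtain ⟨i₀, hi₀⟩ : ∃ i, σ i ≠ i := by
    by_contra! hc
    exact hid (Equiv.ext hc)
  have step : ∀ i, σ i = i + 1 → σ (i + 1) = i + 1 + 1 := fun i hi =>
    (h (i + 1)).resolve_left fun h' => by simpa using σ.injective (hi.trans h'.symm)
  have shift : ∀ k : ℕ, σ (i₀ + k) = i₀ + k + 1 := by
    intro k
    induction k with
    | zero => simpa using (h i₀).resolve_left hi₀
    | succ k ih => simpa [add_assoc] using step _ ih
  refine Equiv.ext fun j => ?_
  simpa [finRotate_apply] using shift (j - i₀).val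

theorem Matrix.det_cyclic_bidiagonal {R : Type*} [CommRing R] {n : ℕ} (d c : Fin (n + 2) → R) :
    (Matrix.of fun i j : Fin (n + 2) => if i = j then d i else if i = j + 1 then -c j else 0).det
      = ∏ i, d i - ∏ i, c i := by
  set M : Matrix (Fin (n + 2)) (Fin (n + 2)) R :=
    Matrix.of fun i j => if i = j then d i else if i = j + 1 then -c j else 0
  have hvanish : ∀ σ ∉ ({1, finRotate (n + 2)} : Finset (Equiv.Perm (Fin (n + 2)))),
      Equiv.Perm.sign σ • ∏ i, M (σ i) i = 0 := by
    intro σ hσ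
    obtain ⟨i, hi⟩ : ∃ i, ¬(σ i = i ∨ σ i = i + 1) := by
      by_contra! h
      rcases Equiv.Perm.eq_one_or_eq_finRotate_of_forall_eq_or_eq_add_one σ h with rfl | rfl <;>
        simp at hσ
    rw [not_or] at hi
    rw [Finset.prod_eq_zero (Finset.mem_univ i) (by simp [M, hi.1, hi.2]), smul_zero]
  have hrot : (1 : Equiv.Perm (Fin (n + 2))) ≠ finRotate (n + 2) := fun h => by
    simpa [finRotate_apply] using (congrArg (· 0) h)
  rw [Matrix.det_apply, ← Finset.sum_subset (Finset.subset_univ _) fun σ _ => hvanish σ,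
    Finset.sum_pair hrot]
  -- the sign `(-1) ^ (n + 1)` of the rotation cancels against the `n + 2` signs of the `-c j`
  simp only [M, finRotate_apply, sign_finRotate]
  simp [Finset.prod_neg, Units.smul_def, pow_succ, ← mul_assoc, ← mul_pow, sub_eq_add_neg]

theorem smul_one_sub_Acyc (n : ℕ) (α : Fin (n + 2) → ℝ) (β a t : ℝ) :
    t • (1 : Matrix (Fin (n + 2)) (Fin (n + 2)) ℝ) - Acyc (n + 2) α β a
      = Matrix.of fun i j => if i = j then t + a * α i
          else if i = j + 1 then -(if j = Fin.last (n + 1) then β else 1) else 0 := by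
  ext i j
  by_cases hij : i = j
  · subst hij
    simp [Acyc]
  by_cases hsucc : i = j + 1
  · subst hsucc
    have hmod : ((j : ℕ) + 1) % (n + 2) = ((j + 1 : Fin (n + 2)) : ℕ) := by
      simp [Fin.val_add]
    have hlast : j + 1 = 0 ↔ j = Fin.last (n + 1) := by
      rw [Fin.ext_iff, Fin.val_add_one]
      split_ifs <;> simp_all
    simp [Acyc, hij, hmod, hlast]
  · have hmod : ((j : ℕ) + 1) % (n + 2) ≠ i := by
      rw [Fin.ext_iff, Fin.val_add, Fin.val_one] at hsucc
      exact hsucc ∘ Eq.symm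
    simp [Acyc, hij, Ne.symm hij, hsucc, hmod]

theorem det_smul_one_sub_Acyc (n : ℕ) (α : Fin (n + 2) → ℝ) (β a t : ℝ) :
    (t • (1 : Matrix (Fin (n + 2)) (Fin (n + 2)) ℝ) - Acyc (n + 2) α β a).det
      = ∏ m, (t + a * α m) - β := by
  rw [smul_one_sub_Acyc, Matrix.det_cyclic_bidiagonal, Finset.prod_ite_eq']
  simp

open Filter Topology

theorem hasDerivAt_prod_add_mul_of_eq_zero {ι : Type*} [Fintype ι] {α : ι → ℝ}
    (hα : ∀ m, α m ≠ 0) {f : ℝ → ℝ} {f' : ℝ} (hf : HasDerivAt f f' 1) (hf₁ : f 1 = 0) :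
    HasDerivAt (fun a => ∏ m, (f a + a * α m))
      ((∏ m, α m) * (f' * ∑ m, (α m)⁻¹ + Fintype.card ι)) 1 := by
  classical
  refine (HasDerivAt.fun_finsetProd (u := Finset.univ) fun m _ =>
    hf.add ((hasDerivAt_id' 1).mul_const (α m))).congr_deriv ?_
  have herase : ∀ m, ∏ j ∈ Finset.univ.erase m, α j = (∏ j, α j) * (α m)⁻¹ := fun m => by
    rw [← Finset.mul_prod_erase _ _ (Finset.mem_univ m)]
    field_simp [hα m]
  simp only [Pi.add_apply, hf₁, zero_add, one_mul, smul_eq_mul, herase]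
  calc ∑ m, (∏ j, α j) * (α m)⁻¹ * (f' + α m) = ∑ m, (∏ j, α j) * (f' * (α m)⁻¹ + 1) :=
        Finset.sum_congr rfl fun m _ => by field_simp [hα m]
    _ = _ := by simp [Finset.sum_add_distrib, ← Finset.mul_sum, mul_add, mul_comm]

theorem eq_neg_card_div_sum_inv_of_prod_add_mul_eventuallyEq {ι : Type*} [Fintype ι]
    {α : ι → ℝ} (hα : ∀ m, α m ≠ 0) (hsum : ∑ m, (α m)⁻¹ ≠ 0) {f : ℝ → ℝ} {f' c : ℝ}
    (hf : HasDerivAt f f' 1) (hf₁ : f 1 = 0)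
    (hconst : (fun a => ∏ m, (f a + a * α m)) =ᶠ[𝓝 1] fun _ => c) :
    f' = -(Fintype.card ι : ℝ) / ∑ m, (α m)⁻¹ := by
  have hzero := (hasDerivAt_prod_add_mul_of_eq_zero hα hf hf₁).unique
    ((hasDerivAt_const 1 c).congr_of_eventuallyEq hconst)
  have hprod : ∏ m, α m ≠ 0 := Finset.prod_ne_zero_iff.mpr fun m _ => hα m
  rw [eq_div_iff hsum]
  linarith [(mul_eq_zero.mp hzero).resolve_left hprod]

theorem zero_eigenvalue_crossing_derivative_general (N : ℕ) (hN : 3 ≤ N)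
    (α : Fin N → ℝ) (hα : ∀ m, α m ≠ 0)
    (b : ℤ)
    (hsum : ∑ m : Fin N, (α m)⁻¹ ≠ 0)
    (δ : ℝ) (hδ : 0 < δ) (lam lam' : ℝ → ℝ)
    (hdiff : ∀ a ∈ Set.Ioo (1 - δ) (1 + δ), HasDerivAt lam (lam' a) a)
    (h1 : lam 1 = 0)
    (hroot : ∀ a ∈ Set.Ioo (1 - δ) (1 + δ),
      Matrix.det (lam a • (1 : Matrix (Fin N) (Fin N) ℝ) - Acyc N α (b : ℝ) a) = 0) :
    lam' 1 = -(N : ℝ) / (∑ m : Fin N, (α m)⁻¹) := by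
  obtain ⟨n, rfl⟩ : ∃ n, N = n + 2 := ⟨N - 2, by omega⟩
  have hone : (1 : ℝ) ∈ Set.Ioo (1 - δ) (1 + δ) := ⟨by linarith, by linarith⟩
  have hconst : (fun a => ∏ m, (lam a + a * α m)) =ᶠ[𝓝 1] fun _ => (b : ℝ) := by
    filter_upwards [Ioo_mem_nhds hone.1 hone.2] with a ha
    linarith [det_smul_one_sub_Acyc n α b a (lam a) ▸ hroot a ha]
  simpa using eq_neg_card_div_sum_inv_of_prod_add_mul_eventuallyEq hα hsum (hdiff 1 hone) h1
    hconst

/-- **Transverse crossing of the zero eigenvalue at `a = 1` (Proposition 3.2(i),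
derivative formula (3.12)).** If `(−1)^{N_aut} = β`, `Σ_m 1/α_m ≠ 0`, and
`λ : (1−δ, 1+δ) → ℝ` is a differentiable eigenvalue branch with `λ(1) = 0` and
`det(λ(a)·I − A(a)) = 0`, then `λ'(1) = −N / (Σ_m 1/α_m)`, minus the harmonic
mean of the `α_m`. -/
theorem zero_eigenvalue_crossing_derivative (N : ℕ) (hN : 3 ≤ N)
    (α : Fin N → ℝ) (hα : ∀ m, α m ≠ 0) (hprod : ∏ m : Fin N, |α m| = 1)
    (b : ℤ) (hb : b = 1 ∨ b = -1) (hpar : (-1 : ℤ) ^ (NautOf α) = b)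
    (hsum : ∑ m : Fin N, (α m)⁻¹ ≠ 0)
    (δ : ℝ) (hδ : 0 < δ) (lam lam' : ℝ → ℝ)
    (hdiff : ∀ a ∈ Set.Ioo (1 - δ) (1 + δ), HasDerivAt lam (lam' a) a)
    (h1 : lam 1 = 0)
    (hroot : ∀ a ∈ Set.Ioo (1 - δ) (1 + δ),
      Matrix.det (lam a • (1 : Matrix (Fin N) (Fin N) ℝ) - Acyc N α (b : ℝ) a) = 0) :
    lam' 1 = -(N : ℝ) / (∑ m : Fin N, (α m)⁻¹) :=
  zero_eigenvalue_crossing_derivative_general N hN α hα b hsum δ hδ lam lam' hdiff h1 hroot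
end

section
/- Kernel eigenvector of A(1) and its zero number (Proposition 3.2(i), equation (3.10)). Let A(a) be the normalized N-cycle matrix defined in the context and assume (−1)^{N_aut} = β. Define ξ ∈ ℝ^N by ξ_1 := 1 and ξ_m := ξ_{m−1}/α_m for 2 ≤ m ≤ N. Then A(1)·ξ = 0, and the twisted cyclic sign-change count z(ξ) := #{1 ≤ m ≤ N−1 : ξ_m·ξ_{m+1} < 0} + (1 if β·ξ_N·ξ_1 < 0, and 0 otherwise) equals N_aut. -/
open scoped BigOperators

/-!
The recursion says `ξ_m = α_{m+1} ξ_{m+1}`, which is exactly the vanishing of rows `2, …, N` of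
`A(1) ξ`, and which telescopes to `(∏ α) ξ_N = α_1 ξ_1`. As `∏ α = (−1)^{N_aut} ∏ |α| = β`, the
first row `β ξ_N − α_1 ξ_1` vanishes too. The same relations give `ξ_m ξ_{m+1} = α_{m+1} ξ_{m+1}²`
and `β ξ_N ξ_1 = α_1 ξ_1²`, so each of the `N` terms of the twisted sign-change count of `ξ` is
the indicator of `α_m < 0` for a different `m`.
-/

open Finset Fin Matrix

theorem Finset.prod_eq_neg_one_pow_card_mul_prod_abs {ι R : Type*} [CommRing R] [LinearOrder R]
    [IsStrictOrderedRing R] (s : Finset ι) (f : ι → R) :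
    ∏ i ∈ s, f i = (-1) ^ #{i ∈ s | f i < 0} * ∏ i ∈ s, |f i| := by
  have hsplit : ∀ i, f i = (if f i < 0 then -1 else 1) * |f i| := by
    intro i
    split_ifs with h
    · rw [abs_of_neg h, neg_one_mul, neg_neg]
    · rw [abs_of_nonneg (not_lt.mp h), one_mul]
  rw [prod_congr rfl fun i _ => hsplit i, prod_mul_distrib, prod_ite, prod_const, prod_const,
    one_pow, mul_one]

theorem mul_neg_iff_of_eq_mul {R : Type*} [CommRing R] [LinearOrder R] [IsStrictOrderedRing R]
    {a x y : R} (hy : y ≠ 0) (hx : x = a * y) : x * y < 0 ↔ a < 0 := by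
  rw [hx, mul_assoc]
  exact ⟨fun h => neg_of_mul_neg_left h (mul_self_nonneg y),
    fun h => mul_neg_of_neg_of_pos h (mul_self_pos.mpr hy)⟩

namespace Fin

theorem prod_mul_last_eq_of_eq_mul_succ {M : Type*} [CommMonoid M] :
    ∀ {n : ℕ} {α ξ : Fin (n + 1) → M}, (∀ i : Fin n, ξ i.castSucc = α i.succ * ξ i.succ) →
      (∏ i, α i) * ξ (last n) = α 0 * ξ 0
  | 0, _, _, _ => by simp
  | n + 1, α, ξ, h => by
    rw [prod_univ_castSucc, mul_assoc, ← succ_last, ← h (last n)]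
    exact prod_mul_last_eq_of_eq_mul_succ (α := fun i => α i.castSucc)
      (ξ := fun i => ξ i.castSucc) fun i => h i.castSucc

theorem ne_zero_of_eq_div_succ {K : Type*} [DivisionRing K] {n : ℕ} {α ξ : Fin (n + 1) → K}
    (hα : ∀ i, α i ≠ 0) (h0 : ξ 0 ≠ 0) (h : ∀ i : Fin n, ξ i.succ = ξ i.castSucc / α i.succ) :
    ∀ i, ξ i ≠ 0 := by
  intro i
  induction i using Fin.induction with
  | zero => exact h0
  | succ i ih => rw [h i]; exact div_ne_zero ih (hα _)

theorem card_filter_lt_and_succ_mod {n : ℕ} (p : Fin (n + 1) → Fin (n + 1) → Prop)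
    [DecidableRel p] :
    #{m : Fin (n + 1) | (m : ℕ) + 1 < n + 1 ∧
        p m ⟨((m : ℕ) + 1) % (n + 1), Nat.mod_lt _ n.succ_pos⟩} =
      #{i : Fin n | p i.castSucc i.succ} := by
  simp only [card_filter, sum_univ_castSucc, val_last, lt_self_iff_false, false_and, if_false,
    add_zero]
  refine sum_congr rfl fun i _ => ?_
  have hsucc : (⟨((i : ℕ) + 1) % (n + 1), Nat.mod_lt _ n.succ_pos⟩ : Fin (n + 1)) = i.succ :=
    Fin.ext (Nat.mod_eq_of_lt (Nat.succ_lt_succ i.isLt))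
  simp only [val_castSucc, hsucc, Nat.succ_lt_succ i.isLt, true_and]

end Fin

section Acyc

variable {n : ℕ} (α : Fin (n + 1) → ℝ) (β a : ℝ) (v : Fin (n + 1) → ℝ)

theorem Acyc_mulVec_apply_zero (hn : 1 ≤ n) :
    (Acyc (n + 1) α β a *ᵥ v) 0 = -(a * α 0) * v 0 + β * v (last n) := by
  have hl : last n ≠ 0 := by rw [Ne, Fin.ext_iff, val_last, val_zero]; omega
  rw [mulVec, dotProduct, Fintype.sum_eq_add 0 (last n) hl.symm]
  · simp only [Acyc, of_apply, if_neg hl, val_last, Nat.mod_self, val_zero, if_true]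
  · rintro j ⟨hj0, hjl⟩
    have hj : (j : ℕ) + 1 < n + 1 := Nat.succ_lt_succ (val_lt_last hjl)
    simp only [Acyc, of_apply, if_neg hj0, Nat.mod_eq_of_lt hj, val_zero]
    simp

theorem Acyc_mulVec_apply_succ (i : Fin n) :
    (Acyc (n + 1) α β a *ᵥ v) i.succ = -(a * α i.succ) * v i.succ + v i.castSucc := by
  rw [mulVec, dotProduct, Fintype.sum_eq_add i.succ i.castSucc castSucc_lt_succ.ne']
  · simp only [Acyc, of_apply, if_neg castSucc_lt_succ.ne, val_castSucc, val_succ,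
      Nat.mod_eq_of_lt (Nat.succ_lt_succ i.isLt)]
    simp
  · rintro j ⟨hjs, hjc⟩
    have hj : ((j : ℕ) + 1) % (n + 1) ≠ i + 1 := by
      rw [Fin.ne_iff_vne, val_castSucc] at hjc
      rcases Nat.lt_or_ge ((j : ℕ) + 1) (n + 1) with h | h
      · rw [Nat.mod_eq_of_lt h]; omega
      · rw [show (j : ℕ) + 1 = n + 1 by omega, Nat.mod_self]; omega
    simp only [Acyc, of_apply, if_neg hjs, val_succ, if_neg hj]
    simp

variable {α β a v}

theorem Acyc_mulVec_eq_zero_of_eq_mul_succ (hn : 1 ≤ n)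
    (h : ∀ i : Fin n, v i.castSucc = a * α i.succ * v i.succ)
    (hβ : β * v (last n) = a * α 0 * v 0) :
    Acyc (n + 1) α β a *ᵥ v = 0 := by
  funext i
  cases i using Fin.cases with
  | zero => rw [Acyc_mulVec_apply_zero α β a v hn, hβ, Pi.zero_apply]; ring
  | succ i => rw [Acyc_mulVec_apply_succ, h i, Pi.zero_apply]; ring

end Acyc

/-- **Kernel eigenvector of `A(1)` and its zero number (Proposition 3.2(i),
equation (3.10)).** If `(−1)^{N_aut} = β` and `ξ` is defined by `ξ_1 = 1`,
`ξ_m = ξ_{m−1}/α_m` (0-indexed: `ξ 0 = 1`, `ξ m = ξ (m-1) / α m` for `m ≥ 1`),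
then `A(1)·ξ = 0` and the twisted cyclic sign-change count `z(ξ)` equals `N_aut`. -/
theorem kernel_eigenvector_zero_number (N : ℕ) (hN : 3 ≤ N)
    (α : Fin N → ℝ) (hα : ∀ m, α m ≠ 0) (hprod : ∏ m : Fin N, |α m| = 1)
    (b : ℤ) (hpar : (-1 : ℤ) ^ (NautOf α) = b)
    (ξ : Fin N → ℝ) (hξ0 : ξ ⟨0, by omega⟩ = 1)
    (hξ : ∀ m : Fin N, 1 ≤ (m : ℕ) → ξ m = ξ ⟨(m : ℕ) - 1, by omega⟩ / α m) :
    Matrix.mulVec (Acyc N α (b : ℝ) 1) ξ = 0 ∧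
    (Finset.univ.filter fun m : Fin N =>
        (m : ℕ) + 1 < N ∧
        ξ m * ξ ⟨((m : ℕ) + 1) % N, Nat.mod_lt _ (by omega)⟩ < 0).card +
      (if (b : ℝ) * ξ ⟨N - 1, by omega⟩ * ξ ⟨0, by omega⟩ < 0 then 1 else 0) =
      NautOf α := by
  obtain ⟨n, rfl⟩ : ∃ n, N = n + 1 := ⟨N - 1, by omega⟩
  have hrec : ∀ i : Fin n, ξ i.succ = ξ i.castSucc / α i.succ := fun i => hξ i.succ i.succ_pos
  have hne : ∀ i, ξ i ≠ 0 := ne_zero_of_eq_div_succ hα (hξ0 ▸ one_ne_zero) hrec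
  have hmul : ∀ i : Fin n, ξ i.castSucc = α i.succ * ξ i.succ := fun i => by
    rw [hrec i, mul_div_cancel₀ _ (hα _)]
  have hprodα : ∏ m, α m = b := by
    rw [prod_eq_neg_one_pow_card_mul_prod_abs, hprod, mul_one, ← hpar, NautOf]
    push_cast
    rfl
  have hcorner : (b : ℝ) * ξ (last n) = α 0 * ξ 0 := hprodα ▸ prod_mul_last_eq_of_eq_mul_succ hmul
  refine ⟨Acyc_mulVec_eq_zero_of_eq_mul_succ (by omega) (fun i => by rw [one_mul, hmul])
    (by rw [one_mul, hcorner]), ?_⟩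
  have hchanges : #{i : Fin n | ξ i.castSucc * ξ i.succ < 0} = #{i : Fin n | α i.succ < 0} :=
    congrArg card (filter_congr fun i _ => mul_neg_iff_of_eq_mul (hne _) (hmul i))
  have hwrap : (b : ℝ) * ξ ⟨n + 1 - 1, by omega⟩ * ξ ⟨0, by omega⟩ < 0 ↔ α 0 < 0 :=
    mul_neg_iff_of_eq_mul (hne 0) hcorner
  rw [card_filter_lt_and_succ_mod (fun i j => ξ i * ξ j < 0), hchanges, if_congr hwrap rfl rfl,
    NautOf, card_filter_univ_succ' (fun m => α m < 0), add_comm]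
end

section
/- Spectrum of the normalized N-cycle matrix at a = 0 and its derivative (Proposition 3.2(ii)). Let A(a) be the normalized N-cycle matrix defined in the context, regarded as a complex matrix. Then: (a) the eigenvalues of A(0) are exactly the N complex solutions of λ^N = β, and each is an algebraically simple root of the characteristic polynomial of A(0); (b) if δ > 0 and λ : [0,δ) → ℂ is differentiable with λ(0)^N = β and det(λ(a)·I_N − A(a)) = 0 for all a ∈ [0,δ), then the one-sided derivative satisfies λ'(0) = −(1/N)·Σ_{m=1}^N α_m. -/
open scoped BigOperators

/-!
For `N ≥ 2` the characteristic matrix of `A(a)` is supported on the diagonal and the cyclic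
subdiagonal, so in the Leibniz expansion of its determinant only the identity and the `N`-cycle
survive, and the characteristic polynomial is `∏ m, (X + a α_m) - β`. At `a = 0` this is
`X ^ N - β`, which is separable because `β ≠ 0`. Along a root branch, `∏ m, (λ(a) + a α_m) = β`
is constant in `a`; differentiating at `0` gives `λ(0) ^ (N - 1) * (N λ'(0) + Σ α_m) = 0`, and
`λ(0) ≠ 0`.
-/

open Polynomial Finset

theorem finRotate_apply_ne_self {n : ℕ} (i : Fin (n + 2)) : finRotate _ i ≠ i :=
  Equiv.Perm.mem_support.mp (by simp [support_finRotate])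

theorem val_finRotate_eq_mod {n : ℕ} (i : Fin (n + 2)) :
    (finRotate _ i : ℕ) = ((i : ℕ) + 1) % (n + 2) := by
  simp [Fin.val_add]

theorem Equiv.Perm.eq_one_or_eq_finRotate {n : ℕ} {σ : Equiv.Perm (Fin (n + 2))}
    (h : ∀ i, σ i = i ∨ σ i = finRotate _ i) : σ = 1 ∨ σ = finRotate _ := by
  by_contra! hσ
  obtain ⟨i₀, hi₀⟩ : ∃ i, σ i ≠ i := by
    by_contra! hfix
    exact hσ.1 (Equiv.ext hfix)
  have hstep : ∀ i, σ i = finRotate _ i → σ (finRotate _ i) = finRotate _ (finRotate _ i) :=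
    fun i hi => (h _).resolve_left fun hfix =>
      finRotate_apply_ne_self i (σ.injective (hfix.trans hi.symm))
  have hpow : ∀ k : ℕ, σ ((finRotate _ ^ k) i₀) = finRotate _ ((finRotate _ ^ k) i₀) := by
    intro k
    induction k with
    | zero => exact (h i₀).resolve_left hi₀
    | succ k ih => rw [pow_succ', Equiv.Perm.mul_apply]; exact hstep _ ih
  refine hσ.2 (Equiv.ext fun j => ?_)
  obtain ⟨k, rfl⟩ :=
    isCycle_finRotate.exists_pow_eq (finRotate_apply_ne_self i₀) (finRotate_apply_ne_self j)
  exact hpow k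

theorem Matrix.det_of_cyclic_bidiagonal {R : Type*} [CommRing R] {n : ℕ}
    (M : Matrix (Fin (n + 2)) (Fin (n + 2)) R)
    (hM : ∀ i j, j ≠ i → j ≠ finRotate _ i → M j i = 0) :
    M.det = ∏ i, M i i + (-1) ^ (n + 1) * ∏ i, M (finRotate _ i) i := by
  have hne : (1 : Equiv.Perm (Fin (n + 2))) ≠ finRotate _ := fun h =>
    finRotate_apply_ne_self 0 (congrArg (· 0) h).symm
  rw [det_apply, ← sum_subset (subset_univ {1, finRotate _}), sum_pair hne]
  · simp [sign_finRotate, Units.smul_def]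
  · intro σ _ hσ
    obtain ⟨i, hi⟩ : ∃ i, σ i ≠ i ∧ σ i ≠ finRotate _ i := by
      by_contra! h
      rcases Equiv.Perm.eq_one_or_eq_finRotate fun i => or_iff_not_imp_left.mpr (h i) with h | h <;>
        simp [h] at hσ
    rw [prod_eq_zero (f := fun j => M (σ j) j) (mem_univ i) (hM i _ hi.1 hi.2), smul_zero]

theorem Acyc_apply {n : ℕ} (α : Fin (n + 2) → ℝ) (β a : ℝ) (i j : Fin (n + 2)) :
    Acyc (n + 2) α β a i j =
      if j = i then -(a * α i) else if finRotate _ j = i then (if i = 0 then β else 1) else 0 := by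
  rw [Acyc, Matrix.of_apply]
  simp only [Fin.ext_iff, val_finRotate_eq_mod, Fin.val_zero]

theorem charpoly_map_Acyc {n : ℕ} (α : Fin (n + 2) → ℝ) (β a : ℝ) :
    ((Acyc (n + 2) α β a).map (algebraMap ℝ ℂ)).charpoly =
      ∏ m, (X + C ((a * α m : ℝ) : ℂ)) - C (β : ℂ) := by
  have hdiag : ∀ i, ((Acyc (n + 2) α β a).map (algebraMap ℝ ℂ)).charmatrix i i =
      X + C ((a * α i : ℝ) : ℂ) := fun i => by
    simp [Matrix.charmatrix_apply_eq, Acyc_apply, sub_eq_add_neg]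
  have hsub : ∀ i, ((Acyc (n + 2) α β a).map (algebraMap ℝ ℂ)).charmatrix (finRotate _ i) i =
      -C (if finRotate _ i = 0 then (β : ℂ) else 1) := fun i => by
    rw [Matrix.charmatrix_apply_ne _ _ _ (finRotate_apply_ne_self i), Matrix.map_apply, Acyc_apply,
      if_neg (finRotate_apply_ne_self i).symm, if_pos rfl]
    split_ifs <;> simp
  rw [Matrix.charpoly, Matrix.det_of_cyclic_bidiagonal, prod_congr rfl fun i _ => hdiag i,
    prod_congr rfl fun i _ => hsub i,
    Equiv.prod_comp (finRotate _) fun j => -C (if j = 0 then (β : ℂ) else 1)]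
  · have hsign : (-1 : ℂ[X]) ^ (n + 1) * (-1) ^ (n + 2) = -1 := by
      rw [← pow_add]
      exact Odd.neg_one_pow ⟨n + 1, by ring⟩
    simp only [prod_neg, apply_ite C, map_one, Fintype.prod_ite_eq', card_univ, Fintype.card_fin]
    linear_combination C (β : ℂ) * hsign
  · intro i j hi hrot
    rw [Matrix.charmatrix_apply_ne _ _ _ hi, Matrix.map_apply, Acyc_apply, if_neg hi.symm,
      if_neg (Ne.symm hrot)]
    simp

theorem det_smul_one_sub_map_Acyc {n : ℕ} (α : Fin (n + 2) → ℝ) (β a : ℝ) (z : ℂ) :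
    (z • (1 : Matrix (Fin (n + 2)) (Fin (n + 2)) ℂ) -
        (Acyc (n + 2) α β a).map (algebraMap ℝ ℂ)).det = ∏ m, (z + a * α m) - β := by
  rw [Matrix.smul_one_eq_diagonal, ← Matrix.scalar_apply, ← Matrix.eval_charpoly,
    charpoly_map_Acyc]
  simp [eval_prod]

theorem Polynomial.rootMultiplicity_X_pow_sub_C_of_pow_eq {K : Type*} [Field K] {n : ℕ}
    {b z : K} (hn : (n : K) ≠ 0) (hb : b ≠ 0) (hz : z ^ n = b) :
    rootMultiplicity z (X ^ n - C b) = 1 := by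
  have hn0 : 0 < n := Nat.pos_of_ne_zero fun h => hn (by simp [h])
  refine le_antisymm (rootMultiplicity_le_one_of_separable (separable_X_pow_sub_C b hn hb) z) ?_
  exact (rootMultiplicity_pos (X_pow_sub_C_ne_zero hn0 b)).mpr (by simp [hz])

theorem HasDerivWithinAt.prod_add_ofReal_mul_at_zero {ι : Type*} [Fintype ι] {f : ℝ → ℂ}
    {f' : ℂ} {s : Set ℝ} (hf : HasDerivWithinAt f f' s 0) (c : ι → ℂ) :
    HasDerivWithinAt (fun a : ℝ => ∏ i, (f a + a * c i))
      (f 0 ^ (Fintype.card ι - 1) * (Fintype.card ι * f' + ∑ i, c i)) s 0 := by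
  classical
  have hfac : ∀ i ∈ univ, HasDerivWithinAt (fun a : ℝ => f a + a * c i) (f' + c i) s 0 :=
    fun i _ => hf.add <| by
      simpa using (Complex.ofRealCLM.hasDerivAt.mul_const (c i)).hasDerivWithinAt
  refine (HasDerivWithinAt.fun_finsetProd hfac).congr_deriv ?_
  simp [prod_const, card_erase_of_mem, ← mul_sum, sum_add_distrib]

theorem Acyc_spectrum_at_zero_general (N : ℕ) (hN : 3 ≤ N)
    (α : Fin N → ℝ)
    (b : ℤ) (hb : b = 1 ∨ b = -1) :
    (∀ z : ℂ, z ∈ specC (Acyc N α (b : ℝ) 0) ↔ z ^ N = (b : ℂ)) ∧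
    (∀ z : ℂ, z ^ N = (b : ℂ) →
      Polynomial.rootMultiplicity z
        (Matrix.charpoly ((Acyc N α (b : ℝ) 0).map (algebraMap ℝ ℂ))) = 1) ∧
    (∀ δ : ℝ, 0 < δ → ∀ lam lam' : ℝ → ℂ,
      (∀ a ∈ Set.Ico (0 : ℝ) δ, HasDerivWithinAt lam (lam' a) (Set.Ico (0 : ℝ) δ) a) →
      (lam 0) ^ N = (b : ℂ) →
      (∀ a ∈ Set.Ico (0 : ℝ) δ,
        Matrix.det (lam a • (1 : Matrix (Fin N) (Fin N) ℂ) -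
          (Acyc N α (b : ℝ) a).map (algebraMap ℝ ℂ)) = 0) →
      lam' 0 = -(1 / (N : ℂ)) * ∑ m : Fin N, (α m : ℂ)) := by
  obtain ⟨n, rfl⟩ : ∃ n, N = n + 2 := ⟨N - 2, by omega⟩
  have hb0 : (b : ℂ) ≠ 0 := by rcases hb with rfl | rfl <;> norm_num
  have hN0 : ((n + 2 : ℕ) : ℂ) ≠ 0 := Nat.cast_ne_zero.mpr (by omega)
  have hchar :
      ((Acyc (n + 2) α b 0).map (algebraMap ℝ ℂ)).charpoly = X ^ (n + 2) - C (b : ℂ) := by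
    rw [charpoly_map_Acyc]
    simp
  refine ⟨fun z => ?_, fun z hz => ?_, fun δ hδ lam lam' hderiv hlam0 hdet => ?_⟩
  · rw [specC, hchar, mem_roots (X_pow_sub_C_ne_zero (by omega) _)]
    simp [sub_eq_zero]
  · rw [hchar]
    exact rootMultiplicity_X_pow_sub_C_of_pow_eq hN0 hb0 hz
  have h0 : (0 : ℝ) ∈ Set.Ico 0 δ := ⟨le_rfl, hδ⟩
  have hbranch : ∀ a ∈ Set.Ico (0 : ℝ) δ, ∏ m, (lam a + a * α m) = b := fun a ha => by
    have h := hdet a ha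
    rw [det_smul_one_sub_map_Acyc, sub_eq_zero] at h
    exact_mod_cast h
  have hprod := (hderiv 0 h0).prod_add_ofReal_mul_at_zero fun m => (α m : ℂ)
  have hconst := (hasDerivWithinAt_const 0 (Set.Ico 0 δ) (b : ℂ)).congr_of_mem hbranch h0
  have hzero := (uniqueDiffOn_Ico 0 δ 0 h0).eq_deriv _ hprod hconst
  have hpow_ne : lam 0 ^ (n + 1) ≠ 0 := pow_ne_zero _ fun h => hb0 (by simp [← hlam0, h])
  rw [Fintype.card_fin] at hzero
  have hsum := (mul_eq_zero.mp hzero).resolve_left hpow_ne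
  field_simp
  linear_combination hsum

/-- **Spectrum of the normalized N-cycle matrix at `a = 0` and its derivative
(Proposition 3.2(ii)).** (a) The eigenvalues of `A(0)` are exactly the solutions
of `λ^N = β`, each an algebraically simple root of the characteristic
polynomial. (b) Any differentiable root branch `λ : [0,δ) → ℂ` with
`λ(0)^N = β` has one-sided derivative `λ'(0) = −(1/N)·Σ_m α_m`. -/
theorem Acyc_spectrum_at_zero (N : ℕ) (hN : 3 ≤ N)
    (α : Fin N → ℝ) (hα : ∀ m, α m ≠ 0) (hprod : ∏ m : Fin N, |α m| = 1)
    (b : ℤ) (hb : b = 1 ∨ b = -1) :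
    (∀ z : ℂ, z ∈ specC (Acyc N α (b : ℝ) 0) ↔ z ^ N = (b : ℂ)) ∧
    (∀ z : ℂ, z ^ N = (b : ℂ) →
      Polynomial.rootMultiplicity z
        (Matrix.charpoly ((Acyc N α (b : ℝ) 0).map (algebraMap ℝ ℂ))) = 1) ∧
    (∀ δ : ℝ, 0 < δ → ∀ lam lam' : ℝ → ℂ,
      (∀ a ∈ Set.Ico (0 : ℝ) δ, HasDerivWithinAt lam (lam' a) (Set.Ico (0 : ℝ) δ) a) →
      (lam 0) ^ N = (b : ℂ) →
      (∀ a ∈ Set.Ico (0 : ℝ) δ,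
        Matrix.det (lam a • (1 : Matrix (Fin N) (Fin N) ℂ) -
          (Acyc N α (b : ℝ) a).map (algebraMap ℝ ℂ)) = 0) →
      lam' 0 = -(1 / (N : ℂ)) * ∑ m : Fin N, (α m : ℂ)) :=
  Acyc_spectrum_at_zero_general N hN α b hb
end
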